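/- arXiv:2009.06571 — 9 statements merged into one kernel-verified Lean document; each statement's English description precedes it below -/
import Mathlib

section
/- Let p ∈ [1,∞], let E be ℝ^d equipped with the ℓ^p norm, let f : E → ℝ be twice continuously differentiable, let x ∈ E with f(x) > 0, and let R > 0. If δ ∈ E satisfies f(x+δ) ≤ 0, then ‖δ‖_p ≥ min{ R, f(x) / ( ‖f′(x)‖ + (R/2)·K_R(f,x) ) }, where ‖f′(x)‖ is the operator norm of the Fréchet derivative of f at x (as a continuous linear functional on E) and K_R(f,x) := sup_{‖γ‖_p ≤ R} ‖f″(x+γ)‖. -/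
/-!
Taylor's theorem with Lagrange remainder along the segment from `x` to `x + δ` gives
`f x ≤ f (x + δ) + ‖f′(x)‖ ‖δ‖ + (K/2) ‖δ‖²` for any bound `K` of `‖f″‖` on that segment.
Unless `‖δ‖ ≥ R`, the segment lies in the closed `R`-ball around `x`, so `K = K_R(f,x)` works and
`(K/2) ‖δ‖² ≤ (R/2) K ‖δ‖`; with `f (x + δ) ≤ 0` this is the claimed lower bound on `‖δ‖`.
-/

open scoped ENNReal

open Set Metric

section SecondOrderTaylor

variable {E F : Type*} [NormedAddCommGroup E] [NormedSpace ℝ E]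
  [NormedAddCommGroup F] [NormedSpace ℝ F]

theorem hasDerivAt_comp_add_smul {f : E → F} (hf : Differentiable ℝ f) (x δ : E) (t : ℝ) :
    HasDerivAt (fun s : ℝ => f (x + s • δ)) (fderiv ℝ f (x + t • δ) δ) t := by
  have hline : HasDerivAt (fun s : ℝ => x + s • δ) δ t := by
    simpa using ((hasDerivAt_id t).smul_const δ).const_add x
  exact (hf _).hasFDerivAt.comp_hasDerivAt t hline

theorem iteratedDeriv_two_comp_add_smul {f : E → F} (hf : ContDiff ℝ 2 f) (x δ : E) (t : ℝ) :
    iteratedDeriv 2 (fun s : ℝ => f (x + s • δ)) t = fderiv ℝ (fderiv ℝ f) (x + t • δ) δ δ := by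
  have hf' : Differentiable ℝ (fderiv ℝ f) :=
    (hf.fderiv_right (m := 1) le_rfl).differentiable one_ne_zero
  have hderiv : deriv (fun s : ℝ => f (x + s • δ)) = fun s => fderiv ℝ f (x + s • δ) δ :=
    funext fun s => (hasDerivAt_comp_add_smul (hf.differentiable two_ne_zero) x δ s).deriv
  rw [iteratedDeriv_succ, iteratedDeriv_one, hderiv]
  exact ((hasDerivAt_comp_add_smul hf' x δ t).clm_apply (hasDerivAt_const t δ)).deriv.trans
    (by simp)

variable {f : E → ℝ}

theorem exists_eq_add_fderiv_add_half_fderiv_fderiv (hf : ContDiff ℝ 2 f) (x δ : E) :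
    ∃ ξ ∈ Ioo (0 : ℝ) 1, f (x + δ) =
      f x + fderiv ℝ f x δ + fderiv ℝ (fderiv ℝ f) (x + ξ • δ) δ δ / 2 := by
  set g : ℝ → ℝ := fun s => f (x + s • δ)
  have hg : ContDiff ℝ 2 g := hf.comp (contDiff_const.add (contDiff_id.smul contDiff_const))
  obtain ⟨ξ, hξ, hrem⟩ :=
    taylor_mean_remainder_lagrange_iteratedDeriv (f := g) (n := 1) zero_ne_one hg.contDiffOn
  rw [uIoo_of_le zero_le_one] at hξ
  refine ⟨ξ, hξ, ?_⟩
  have hpoly : taylorWithinEval g 1 (uIcc 0 1) 0 1 = f x + fderiv ℝ f x δ := by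
    have hg0 := hasDerivAt_comp_add_smul (hf.differentiable two_ne_zero) x δ 0
    rw [taylorWithinEval_succ, taylor_within_zero_eval, iteratedDerivWithin_one,
      hg0.differentiableAt.derivWithin (uniqueDiffOn_uIcc zero_ne_one 0 left_mem_uIcc),
      hg0.deriv]
    simp [g]
  rw [hpoly, iteratedDeriv_two_comp_add_smul hf] at hrem
  norm_num at hrem
  simp only [g, one_smul] at hrem
  linarith

theorem abs_sub_sub_fderiv_le (hf : ContDiff ℝ 2 f) {x δ : E} {K : ℝ}
    (hK : ∀ t ∈ Icc (0 : ℝ) 1, ‖fderiv ℝ (fderiv ℝ f) (x + t • δ)‖ ≤ K) :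
    |f (x + δ) - f x - fderiv ℝ f x δ| ≤ K / 2 * ‖δ‖ ^ 2 := by
  obtain ⟨ξ, hξ, htaylor⟩ := exists_eq_add_fderiv_add_half_fderiv_fderiv hf x δ
  have hHess : |fderiv ℝ (fderiv ℝ f) (x + ξ • δ) δ δ| ≤ K * ‖δ‖ ^ 2 :=
    calc |fderiv ℝ (fderiv ℝ f) (x + ξ • δ) δ δ|
        ≤ ‖fderiv ℝ (fderiv ℝ f) (x + ξ • δ)‖ * ‖δ‖ * ‖δ‖ :=
          (fderiv ℝ (fderiv ℝ f) (x + ξ • δ)).le_opNorm₂ δ δ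
      _ ≤ K * ‖δ‖ * ‖δ‖ := by gcongr; exact hK ξ (Ioo_subset_Icc_self hξ)
      _ = K * ‖δ‖ ^ 2 := by ring
  have hremainder :
      f (x + δ) - f x - fderiv ℝ f x δ = fderiv ℝ (fderiv ℝ f) (x + ξ • δ) δ δ / 2 := by
    rw [htaylor]; ring
  rw [hremainder, abs_div, abs_two]
  linarith

theorem apply_le_mul_norm_of_apply_add_nonpos (hf : ContDiff ℝ 2 f) {x δ : E} {K R : ℝ}
    (hδ : f (x + δ) ≤ 0) (hδR : ‖δ‖ ≤ R) (hK₀ : 0 ≤ K)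
    (hK : ∀ t ∈ Icc (0 : ℝ) 1, ‖fderiv ℝ (fderiv ℝ f) (x + t • δ)‖ ≤ K) :
    f x ≤ (‖fderiv ℝ f x‖ + R / 2 * K) * ‖δ‖ := by
  have hTaylor := (abs_le.mp (abs_sub_sub_fderiv_le hf hK)).1
  have hgrad := (abs_le.mp ((fderiv ℝ f x).le_opNorm δ)).1
  have hquad : K * ‖δ‖ * ‖δ‖ ≤ K * R * ‖δ‖ := by gcongr
  linarith

end SecondOrderTaylor

theorem hessian_robustness_fixedR_general
    (d : ℕ) (p : ℝ≥0∞) [Fact (1 ≤ p)]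
    (f : PiLp p (fun _ : Fin d => ℝ) → ℝ) (hf : ContDiff ℝ 2 f)
    (x : PiLp p (fun _ : Fin d => ℝ))
    (R : ℝ)
    (δ : PiLp p (fun _ : Fin d => ℝ)) (hδ : f (x + δ) ≤ 0) :
    min R (f x / (‖fderiv ℝ f x‖ +
      R / 2 * sSup ((fun γ => ‖fderiv ℝ (fderiv ℝ f) (x + γ)‖) ''
        Metric.closedBall 0 R))) ≤ ‖δ‖ := by
  set K := sSup ((fun γ => ‖fderiv ℝ (fderiv ℝ f) (x + γ)‖) '' Metric.closedBall 0 R)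
  rcases le_or_gt R ‖δ‖ with hRδ | hδR
  · exact (min_le_left _ _).trans hRδ
  have hcont : Continuous fun γ => ‖fderiv ℝ (fderiv ℝ f) (x + γ)‖ :=
    (((hf.fderiv_right (m := 1) le_rfl).continuous_fderiv one_ne_zero).comp
      (continuous_const_add x)).norm
  have hK : ∀ γ ∈ closedBall 0 R, ‖fderiv ℝ (fderiv ℝ f) (x + γ)‖ ≤ K := fun γ hγ =>
    le_csSup ((isCompact_closedBall 0 R).bddAbove_image hcont.continuousOn) (mem_image_of_mem _ hγ)
  have hsegment : ∀ t ∈ Icc (0 : ℝ) 1, t • δ ∈ closedBall 0 R := fun t ht => by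
    rw [mem_closedBall_zero_iff, norm_smul, Real.norm_of_nonneg ht.1]
    nlinarith [ht.2, norm_nonneg δ]
  have hK₀ : 0 ≤ K := le_trans (by positivity) (hK _ (hsegment 0 ⟨le_rfl, zero_le_one⟩))
  have hR₀ : 0 ≤ R := (norm_nonneg δ).trans hδR.le
  refine (min_le_right _ _).trans (div_le_of_le_mul₀ (by positivity) (norm_nonneg _) ?_)
  rw [mul_comm]
  exact apply_le_mul_norm_of_apply_add_nonpos hf hδ hδR.le hK₀ fun t ht => hK _ (hsegment t ht)

/-- Fixed-`R` form of Theorem 2: if `f x > 0` and `f (x + δ) ≤ 0`, then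
`‖δ‖ₚ ≥ min { R, f x / (‖f′(x)‖ + (R/2)·K_R(f,x)) }`, where
`K_R(f,x) = sup_{‖γ‖ₚ ≤ R} ‖f″(x+γ)‖`. -/
theorem hessian_robustness_fixedR
    (d : ℕ) (hd : 1 ≤ d) (p : ℝ≥0∞) [Fact (1 ≤ p)]
    (f : PiLp p (fun _ : Fin d => ℝ) → ℝ) (hf : ContDiff ℝ 2 f)
    (x : PiLp p (fun _ : Fin d => ℝ)) (hx : 0 < f x)
    (R : ℝ) (hR : 0 < R)
    (δ : PiLp p (fun _ : Fin d => ℝ)) (hδ : f (x + δ) ≤ 0) :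
    min R (f x / (‖fderiv ℝ f x‖ +
      R / 2 * sSup ((fun γ => ‖fderiv ℝ (fderiv ℝ f) (x + γ)‖) ''
        Metric.closedBall 0 R))) ≤ ‖δ‖ :=
  hessian_robustness_fixedR_general d p f hf x R δ hδ
end

section
/- Let p ∈ [1,∞], let E be ℝ^d equipped with the ℓ^p norm, let f : E → ℝ be twice continuously differentiable, and let x ∈ E with f(x) > 0. If δ ∈ E satisfies f(x+δ) ≤ 0, then ‖δ‖_p ≥ sup_{R > 0} min{ R, f(x) / ( ‖f′(x)‖ + (R/2)·K_R(f,x) ) }, where ‖f′(x)‖ is the operator norm of the Fréchet derivative of f at x and K_R(f,x) := sup_{‖γ‖_p ≤ R} ‖f″(x+γ)‖. -/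
/-!
Taylor's theorem with Lagrange remainder along the segment from `x` to `x + δ` gives
`f x - f (x + δ) ≤ ‖f′(x)‖ ‖δ‖ + (K / 2) ‖δ‖²` whenever `‖f″‖ ≤ K` on that segment.
For `‖δ‖ ≤ R` the segment lies in the ball of radius `R` around `x`, so `K = K_R(f,x)` is such a
bound, and `f (x + δ) ≤ 0 < f x` turns the estimate into
`f x ≤ (‖f′(x)‖ + (R / 2) K_R(f,x)) ‖δ‖`. For `‖δ‖ > R` the term `min R _` is already below `‖δ‖`.
-/

open scoped ENNReal
open Set

section

variable {E : Type*} [NormedAddCommGroup E] [NormedSpace ℝ E] {f : E → ℝ}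

theorem ContDiff.exists_map_add_eq_taylor_two (hf : ContDiff ℝ 2 f) (x v : E) :
    ∃ c ∈ Ioo (0 : ℝ) 1,
      f (x + v) = f x + fderiv ℝ f x v + fderiv ℝ (fderiv ℝ f) (x + c • v) v v / 2 := by
  set g : ℝ → ℝ := fun t => f (x + t • v)
  have hg : ContDiff ℝ 2 g := hf.comp (by fun_prop)
  have hf' : Differentiable ℝ (fderiv ℝ f) :=
    (hf.fderiv_right (m := 1) le_rfl).differentiable one_ne_zero
  have hg' : deriv g = fun t => fderiv ℝ f (x + t • v) v :=
    funext fun t => (hf.differentiable two_ne_zero _).deriv_comp_add_smul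
  have hg'' (t : ℝ) : iteratedDeriv 2 g t = fderiv ℝ (fderiv ℝ f) (x + t • v) v v := by
    rw [iteratedDeriv_succ, iteratedDeriv_one, hg',
      ((hf' _).clm_apply (differentiableAt_const v)).deriv_comp_add_smul]
    simp [fderiv_clm_apply (hf' _) (differentiableAt_const v)]
  obtain ⟨c, hc, hcg⟩ := taylor_mean_remainder_lagrange_iteratedDeriv (n := 1) (x₀ := 0) (x := 1)
    zero_ne_one hg.contDiffOn
  have htaylor : taylorWithinEval g 1 (uIcc 0 1) 0 1 = f x + fderiv ℝ f x v := by
    rw [taylor_within_apply, Finset.sum_range_succ, Finset.sum_range_one,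
      iteratedDerivWithin_eq_iteratedDeriv (uniqueDiffOn_uIcc zero_ne_one)
        (hg.contDiffAt.of_le one_le_two) left_mem_uIcc]
    simp [g, hg']
  rw [uIoo_of_le zero_le_one] at hc
  refine ⟨c, hc, ?_⟩
  rw [htaylor, hg''] at hcg
  norm_num [g] at hcg
  linarith

theorem abs_map_add_sub_le_of_norm_fderiv_fderiv_le (hf : ContDiff ℝ 2 f) {x v : E} {K : ℝ}
    (hK : ∀ t ∈ Icc (0 : ℝ) 1, ‖fderiv ℝ (fderiv ℝ f) (x + t • v)‖ ≤ K) :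
    |f (x + v) - f x| ≤ ‖fderiv ℝ f x‖ * ‖v‖ + K / 2 * ‖v‖ ^ 2 := by
  obtain ⟨c, hc, hcf⟩ := hf.exists_map_add_eq_taylor_two x v
  have hfirst : |fderiv ℝ f x v| ≤ ‖fderiv ℝ f x‖ * ‖v‖ := (fderiv ℝ f x).le_opNorm v
  have hsecond : |fderiv ℝ (fderiv ℝ f) (x + c • v) v v| ≤ K * ‖v‖ ^ 2 :=
    calc |fderiv ℝ (fderiv ℝ f) (x + c • v) v v|
        ≤ ‖fderiv ℝ (fderiv ℝ f) (x + c • v)‖ * ‖v‖ * ‖v‖ :=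
          (fderiv ℝ (fderiv ℝ f) (x + c • v)).le_opNorm₂ v v
      _ ≤ K * ‖v‖ ^ 2 := by
          rw [mul_assoc, ← sq]
          gcongr
          exact hK c (Ioo_subset_Icc_self hc)
  rw [hcf, abs_le]
  have := abs_le.1 hfirst
  have := abs_le.1 hsecond
  constructor <;> linarith

theorem div_le_norm_of_map_add_nonpos (hf : ContDiff ℝ 2 f) {x δ : E} (hx : 0 < f x)
    (hδ : f (x + δ) ≤ 0) {R K : ℝ} (hδR : ‖δ‖ ≤ R)
    (hK : ∀ γ ∈ Metric.closedBall 0 R, ‖fderiv ℝ (fderiv ℝ f) (x + γ)‖ ≤ K) :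
    f x / (‖fderiv ℝ f x‖ + R / 2 * K) ≤ ‖δ‖ := by
  have hK₀ : 0 ≤ K := (norm_nonneg (fderiv ℝ (fderiv ℝ f) x)).trans
    (by simpa using hK 0 (Metric.mem_closedBall_self ((norm_nonneg δ).trans hδR)))
  have hsegment (t : ℝ) (ht : t ∈ Icc (0 : ℝ) 1) : ‖fderiv ℝ (fderiv ℝ f) (x + t • δ)‖ ≤ K := by
    refine hK _ (mem_closedBall_zero_iff.2 ?_)
    rw [norm_smul, Real.norm_of_nonneg ht.1]
    exact (mul_le_of_le_one_left (norm_nonneg δ) ht.2).trans hδR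
  have hdecrease : f x ≤ ‖fderiv ℝ f x‖ * ‖δ‖ + K / 2 * ‖δ‖ ^ 2 := by
    have := abs_le.1 (abs_map_add_sub_le_of_norm_fderiv_fderiv_le hf hsegment)
    linarith
  have hle : f x ≤ (‖fderiv ℝ f x‖ + R / 2 * K) * ‖δ‖ := by
    nlinarith [norm_nonneg δ, mul_le_mul_of_nonneg_left hδR hK₀]
  rw [div_le_iff₀ (pos_of_mul_pos_left (hx.trans_le hle) (norm_nonneg δ))]
  linarith

theorem bddAbove_norm_fderiv_fderiv_image_closedBall [ProperSpace E] (hf : ContDiff ℝ 2 f)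
    (x : E) (R : ℝ) :
    BddAbove ((fun γ => ‖fderiv ℝ (fderiv ℝ f) (x + γ)‖) '' Metric.closedBall 0 R) := by
  have hf'' : Continuous (fderiv ℝ (fderiv ℝ f)) :=
    (hf.fderiv_right (m := 1) le_rfl).continuous_fderiv one_ne_zero
  have hcont : Continuous fun γ => ‖fderiv ℝ (fderiv ℝ f) (x + γ)‖ :=
    (continuous_norm (E := E →L[ℝ] E →L[ℝ] ℝ)).comp (hf''.comp (continuous_const_add x))
  exact (isCompact_closedBall (0 : E) R).bddAbove_image hcont.continuousOn

end

theorem hessian_robustness_general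
    (d : ℕ) (p : ℝ≥0∞) [Fact (1 ≤ p)]
    (f : PiLp p (fun _ : Fin d => ℝ) → ℝ) (hf : ContDiff ℝ 2 f)
    (x : PiLp p (fun _ : Fin d => ℝ)) (hx : 0 < f x)
    (δ : PiLp p (fun _ : Fin d => ℝ)) (hδ : f (x + δ) ≤ 0) :
    sSup {m : ℝ | ∃ R > (0 : ℝ), m = min R (f x / (‖fderiv ℝ f x‖ +
      R / 2 * sSup ((fun γ => ‖fderiv ℝ (fderiv ℝ f) (x + γ)‖) ''
        Metric.closedBall 0 R)))} ≤ ‖δ‖ := by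
  refine Real.sSup_le ?_ (norm_nonneg δ)
  rintro m ⟨R, -, rfl⟩
  rcases le_or_gt R ‖δ‖ with hRδ | hδR
  · exact (min_le_left _ _).trans hRδ
  · exact (min_le_right _ _).trans <| div_le_norm_of_map_add_nonpos hf hx hδ hδR.le
      fun γ hγ => le_csSup (bddAbove_norm_fderiv_fderiv_image_closedBall hf x R) ⟨γ, hγ, rfl⟩

/-- Theorem 2: if `f x > 0` and `f (x + δ) ≤ 0`, then
`‖δ‖ₚ ≥ sup_{R > 0} min { R, f x / (‖f′(x)‖ + (R/2)·K_R(f,x)) }`, where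
`K_R(f,x) = sup_{‖γ‖ₚ ≤ R} ‖f″(x+γ)‖`. -/
theorem hessian_robustness
    (d : ℕ) (hd : 1 ≤ d) (p : ℝ≥0∞) [Fact (1 ≤ p)]
    (f : PiLp p (fun _ : Fin d => ℝ) → ℝ) (hf : ContDiff ℝ 2 f)
    (x : PiLp p (fun _ : Fin d => ℝ)) (hx : 0 < f x)
    (δ : PiLp p (fun _ : Fin d => ℝ)) (hδ : f (x + δ) ≤ 0) :
    sSup {m : ℝ | ∃ R > (0 : ℝ), m = min R (f x / (‖fderiv ℝ f x‖ +
      R / 2 * sSup ((fun γ => ‖fderiv ℝ (fderiv ℝ f) (x + γ)‖) ''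
        Metric.closedBall 0 R)))} ≤ ‖δ‖ :=
  hessian_robustness_general d p f hf x hx δ hδ
end

section
/- Let p ∈ [1,∞], let E be ℝ^d equipped with the ℓ^p norm, let f : E → ℝ be continuously differentiable, let x ∈ E with f(x) > 0, and let R > 0 be such that sup_{‖γ‖_p ≤ R} ‖f′(x+γ)‖ > 0. If δ ∈ E satisfies f(x+δ) ≤ 0, then ‖δ‖_p ≥ min{ R, f(x) / sup_{‖γ‖_p ≤ R} ‖f′(x+γ)‖ }, where ‖f′(y)‖ denotes the operator norm of the Fréchet derivative of f at y (as a continuous linear functional on E). -/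
open scoped ENNReal
open Metric

/-! If `‖δ‖ < R`, the segment from `x` to `x + δ` lies in the ball, so the mean value inequality
gives `f x ≤ f x - f (x + δ) ≤ G ‖δ‖` with `G` the supremum of `‖f′‖` over the ball. -/

theorem min_le_norm_of_nonpos_of_norm_fderiv_le {E : Type*} [NormedAddCommGroup E]
    [NormedSpace ℝ E] {f : E → ℝ} {x δ : E} {R C : ℝ}
    (hf : ∀ y ∈ closedBall x R, DifferentiableAt ℝ f y)
    (hC : ∀ y ∈ closedBall x R, ‖fderiv ℝ f y‖ ≤ C) (hδ : f (x + δ) ≤ 0) :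
    min R (f x / C) ≤ ‖δ‖ := by
  rcases le_or_gt R ‖δ‖ with hδR | hδR
  · exact min_le_of_left_le hδR
  have hx : x ∈ closedBall x R := mem_closedBall_self ((norm_nonneg δ).trans hδR.le)
  have hxδ : x + δ ∈ closedBall x R := by
    simpa [mem_closedBall, dist_eq_norm] using hδR.le
  have hC₀ : 0 ≤ C := (norm_nonneg _).trans (hC x hx)
  have hmvt : ‖f (x + δ) - f x‖ ≤ C * ‖x + δ - x‖ :=
    (convex_closedBall x R).norm_image_sub_le_of_norm_fderiv_le hf hC hx hxδ
  rw [add_sub_cancel_left, Real.norm_eq_abs, abs_sub_comm] at hmvt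
  have hfx : f x ≤ C * ‖δ‖ := by linarith [le_abs_self (f x - f (x + δ))]
  exact min_le_of_right_le (div_le_of_le_mul₀ hC₀ (norm_nonneg δ) (by linarith))

theorem norm_fderiv_le_sSup_closedBall {E : Type*} [NormedAddCommGroup E] [NormedSpace ℝ E]
    [ProperSpace E] {f : E → ℝ} (hf : ContDiff ℝ 1 f) (x : E) (R : ℝ) :
    ∀ y ∈ closedBall x R,
      ‖fderiv ℝ f y‖ ≤ sSup ((fun γ => ‖fderiv ℝ f (x + γ)‖) '' closedBall 0 R) := by
  intro y hy
  have hcont : Continuous fun γ => ‖fderiv ℝ f (x + γ)‖ :=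
    ((hf.continuous_fderiv one_ne_zero).comp (continuous_const_add x)).norm
  have hbdd := ((isCompact_closedBall (0 : E) R).image hcont).bddAbove
  refine le_csSup hbdd ⟨y - x, ?_, by simp⟩
  simpa [mem_closedBall, dist_eq_norm] using hy

theorem gradient_robustness_fixedR_general
    (d : ℕ) (p : ℝ≥0∞) [Fact (1 ≤ p)]
    (f : PiLp p (fun _ : Fin d => ℝ) → ℝ) (hf : ContDiff ℝ 1 f)
    (x : PiLp p (fun _ : Fin d => ℝ))
    (R : ℝ)
    (δ : PiLp p (fun _ : Fin d => ℝ)) (hδ : f (x + δ) ≤ 0) :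
    min R (f x / sSup ((fun γ => ‖fderiv ℝ f (x + γ)‖) '' Metric.closedBall 0 R))
      ≤ ‖δ‖ :=
  min_le_norm_of_nonpos_of_norm_fderiv_le (fun y _ => hf.differentiable one_ne_zero y)
    (norm_fderiv_le_sSup_closedBall hf x R) hδ

/-- Fixed-`R` form of Theorem 1 (Hein–Andriushchenko): if `f x > 0`,
`G_R := sup_{‖γ‖ₚ ≤ R} ‖f′(x+γ)‖ > 0` and `f (x + δ) ≤ 0`, then
`‖δ‖ₚ ≥ min { R, f x / G_R }`. -/
theorem gradient_robustness_fixedR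
    (d : ℕ) (hd : 1 ≤ d) (p : ℝ≥0∞) [Fact (1 ≤ p)]
    (f : PiLp p (fun _ : Fin d => ℝ) → ℝ) (hf : ContDiff ℝ 1 f)
    (x : PiLp p (fun _ : Fin d => ℝ)) (hx : 0 < f x)
    (R : ℝ) (hR : 0 < R)
    (hG : 0 < sSup ((fun γ => ‖fderiv ℝ f (x + γ)‖) '' Metric.closedBall 0 R))
    (δ : PiLp p (fun _ : Fin d => ℝ)) (hδ : f (x + δ) ≤ 0) :
    min R (f x / sSup ((fun γ => ‖fderiv ℝ f (x + γ)‖) '' Metric.closedBall 0 R))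
      ≤ ‖δ‖ :=
  gradient_robustness_fixedR_general d p f hf x R δ hδ
end

section
/- Let p ∈ [1,∞], let E be ℝ^d equipped with the ℓ^p norm, let f : E → ℝ be continuously differentiable, and let x ∈ E with f(x) > 0. If δ ∈ E satisfies f(x+δ) ≤ 0, then ‖δ‖_p ≥ sup_{R > 0, with sup_{‖γ‖_p ≤ R} ‖f′(x+γ)‖ > 0} min{ R, f(x) / sup_{‖γ‖_p ≤ R} ‖f′(x+γ)‖ }, where ‖f′(y)‖ denotes the operator norm of the Fréchet derivative of f at y. -/
/-!
On the ball of radius `R` around `x` the derivative has norm at most `G_R`, so by the mean value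
inequality either `‖δ‖ ≥ R`, or `f x ≤ f x - f (x + δ) ≤ G_R * ‖δ‖`.
-/

open scoped ENNReal

open Metric

theorem le_sSup_image_closedBall_of_continuous {E : Type*} [NormedAddCommGroup E] [ProperSpace E]
    {g : E → ℝ} (hg : Continuous g)
    {x y : E} {R : ℝ} (hy : y ∈ closedBall x R) :
    g y ≤ sSup ((fun γ => g (x + γ)) '' closedBall 0 R) := by
  have hbdd : BddAbove ((fun γ => g (x + γ)) '' closedBall 0 R) :=
    ((isCompact_closedBall 0 R).image (hg.comp (continuous_const.add continuous_id))).bddAbove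
  refine le_csSup_of_le hbdd ⟨y - x, ?_, rfl⟩ (by simp)
  rwa [mem_closedBall, dist_zero_right, ← dist_eq_norm]

section

variable {E : Type*} [NormedAddCommGroup E] [NormedSpace ℝ E]

theorem le_mul_norm_of_norm_fderiv_le {f : E → ℝ} {x δ : E} {R G : ℝ}
    (hf : ∀ y ∈ closedBall x R, DifferentiableAt ℝ f y)
    (hG : ∀ y ∈ closedBall x R, ‖fderiv ℝ f y‖ ≤ G)
    (hδR : ‖δ‖ ≤ R) (hδ : f (x + δ) ≤ 0) :
    f x ≤ G * ‖δ‖ := by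
  have hxδ : x + δ ∈ closedBall x R := by simpa [mem_closedBall, dist_eq_norm] using hδR
  have hx : x ∈ closedBall x R := mem_closedBall_self ((norm_nonneg δ).trans hδR)
  have hmvt := (convex_closedBall x R).norm_image_sub_le_of_norm_fderiv_le hf hG hx hxδ
  rw [add_sub_cancel_left, Real.norm_eq_abs] at hmvt
  calc f x ≤ |f (x + δ) - f x| := by
        rw [abs_sub_comm]; exact (le_abs_self _).trans' (by linarith)
    _ ≤ G * ‖δ‖ := hmvt

theorem min_div_le_norm_of_norm_fderiv_le {f : E → ℝ} {x δ : E} {R G : ℝ}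
    (hf : ∀ y ∈ closedBall x R, DifferentiableAt ℝ f y)
    (hG : ∀ y ∈ closedBall x R, ‖fderiv ℝ f y‖ ≤ G) (hG₀ : 0 < G) (hδ : f (x + δ) ≤ 0) :
    min R (f x / G) ≤ ‖δ‖ := by
  rcases le_or_gt R ‖δ‖ with hRδ | hδR
  · exact (min_le_left _ _).trans hRδ
  · refine (min_le_right _ _).trans ?_
    rw [div_le_iff₀ hG₀, mul_comm]
    exact le_mul_norm_of_norm_fderiv_le hf hG hδR.le hδ

end

theorem gradient_robustness_general
    (d : ℕ) (p : ℝ≥0∞) [Fact (1 ≤ p)]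
    (f : PiLp p (fun _ : Fin d => ℝ) → ℝ) (hf : ContDiff ℝ 1 f)
    (x : PiLp p (fun _ : Fin d => ℝ))
    (δ : PiLp p (fun _ : Fin d => ℝ)) (hδ : f (x + δ) ≤ 0) :
    sSup {m : ℝ | ∃ R > (0 : ℝ),
      0 < sSup ((fun γ => ‖fderiv ℝ f (x + γ)‖) '' Metric.closedBall 0 R) ∧
      m = min R (f x /
        sSup ((fun γ => ‖fderiv ℝ f (x + γ)‖) '' Metric.closedBall 0 R))} ≤ ‖δ‖ := by
  refine Real.sSup_le ?_ (norm_nonneg δ)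
  rintro m ⟨R, -, hG₀, rfl⟩
  have hbound (y) (hy : y ∈ closedBall x R) :=
    le_sSup_image_closedBall_of_continuous (hf.continuous_fderiv one_ne_zero).norm hy
  exact min_div_le_norm_of_norm_fderiv_le (fun y _ => hf.differentiable one_ne_zero y)
    hbound hG₀ hδ

/-- Theorem 1 (Hein–Andriushchenko): if `f x > 0` and `f (x + δ) ≤ 0`, then
`‖δ‖ₚ ≥ sup_{R > 0, G_R > 0} min { R, f x / G_R }` where
`G_R := sup_{‖γ‖ₚ ≤ R} ‖f′(x+γ)‖`. -/
theorem gradient_robustness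
    (d : ℕ) (hd : 1 ≤ d) (p : ℝ≥0∞) [Fact (1 ≤ p)]
    (f : PiLp p (fun _ : Fin d => ℝ) → ℝ) (hf : ContDiff ℝ 1 f)
    (x : PiLp p (fun _ : Fin d => ℝ)) (hx : 0 < f x)
    (δ : PiLp p (fun _ : Fin d => ℝ)) (hδ : f (x + δ) ≤ 0) :
    sSup {m : ℝ | ∃ R > (0 : ℝ),
      0 < sSup ((fun γ => ‖fderiv ℝ f (x + γ)‖) '' Metric.closedBall 0 R) ∧
      m = min R (f x /
        sSup ((fun γ => ‖fderiv ℝ f (x + γ)‖) '' Metric.closedBall 0 R))} ≤ ‖δ‖ :=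
  gradient_robustness_general d p f hf x δ hδ
end

section
/- Let p ∈ [1,∞], let E be ℝ^d equipped with the ℓ^p norm, let K ≥ 2, and let f : E → ℝ^K have twice continuously differentiable components f₁,…,f_K : E → ℝ. Fix x ∈ E and an index t such that f_t(x) > f_j(x) for all j ≠ t, and for j ≠ t set f^{(j)} := f_t − f_j. If δ ∈ E satisfies max_{j ≠ t} f_j(x+δ) > f_t(x+δ), then ‖δ‖_p ≥ sup_{R > 0} min{ R, min_{j ≠ t} f^{(j)}(x) / ( ‖(f^{(j)})′(x)‖ + (R/2)·K_R(f^{(j)},x) ) }, where K_R(g,x) := sup_{‖γ‖_p ≤ R} ‖g″(x+γ)‖. -/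
open scoped ENNReal
open Set Metric

/-! Let `g = f_t − f_j` for a class `j` that overtakes `t` at `x + δ`, so that `g x > 0 ≥ g (x + δ)`.
If `‖δ‖ ≤ R`, second-order Taylor along the segment `[x, x + δ]` with the Hessian bound `K_R(g, x)`
gives `0 ≥ g (x + δ) ≥ g x - ‖g′ x‖ ‖δ‖ - K_R/2 ‖δ‖² ≥ g x - (‖g′ x‖ + R/2 K_R) ‖δ‖`, hence
`‖δ‖ ≥ g x / (‖g′ x‖ + R/2 K_R)`; otherwise `‖δ‖ > R`. -/

lemma add_deriv_sub_half_le_of_abs_deriv_deriv_le {h h' h'' : ℝ → ℝ} {C : ℝ}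
    (hh : ∀ s, HasDerivAt h (h' s) s) (hh' : ∀ s, HasDerivAt h' (h'' s) s)
    (hC : ∀ s ∈ Icc (0 : ℝ) 1, |h'' s| ≤ C) :
    h 0 + h' 0 - C / 2 ≤ h 1 := by
  -- `ψ' s = h' s - h' 0 + C s ≥ 0` because the mean value theorem gives `|h' s - h' 0| ≤ C s`.
  set ψ : ℝ → ℝ := fun s => h s - s * h' 0 + C / 2 * s ^ 2
  have hψ : ∀ s, HasDerivAt ψ (h' s - h' 0 + C * s) s := fun s =>
    (((hh s).sub ((hasDerivAt_id' s).mul_const (h' 0))).add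
      ((hasDerivAt_pow 2 s).const_mul (C / 2))).congr_deriv (by norm_num; ring)
  have hψ_mono : MonotoneOn ψ (Icc 0 1) := by
    refine monotoneOn_of_deriv_nonneg (convex_Icc 0 1)
      (fun s _ => (hψ s).continuousAt.continuousWithinAt)
      (fun s _ => (hψ s).differentiableAt.differentiableWithinAt) fun s hs => ?_
    rw [interior_Icc] at hs
    have h'_lip : ‖h' s - h' 0‖ ≤ C * (s - 0) :=
      norm_image_sub_le_of_norm_deriv_le_segment' (fun y _ => (hh' y).hasDerivWithinAt)
        (fun y hy => hC y ⟨hy.1, hy.2.le.trans hs.2.le⟩) s ⟨hs.1.le, le_rfl⟩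
    rw [(hψ s).deriv]
    linarith [neg_abs_le (h' s - h' 0), Real.norm_eq_abs (h' s - h' 0)]
  have := hψ_mono (left_mem_Icc.2 zero_le_one) (right_mem_Icc.2 zero_le_one) zero_le_one
  simp only [ψ] at this
  linarith

section

variable {E : Type*} [NormedAddCommGroup E] [NormedSpace ℝ E]

lemma add_fderiv_sub_half_le_of_norm_fderiv_fderiv_le {g : E → ℝ} (hg : ContDiff ℝ 2 g)
    {x δ : E} {C : ℝ} (hC : ∀ s ∈ Icc (0 : ℝ) 1, ‖fderiv ℝ (fderiv ℝ g) (x + s • δ)‖ ≤ C) :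
    g x + fderiv ℝ g x δ - C / 2 * ‖δ‖ ^ 2 ≤ g (x + δ) := by
  have hg' : Differentiable ℝ (fderiv ℝ g) :=
    (hg.fderiv_right (m := 1) le_rfl).differentiable one_ne_zero
  have hline : ∀ s : ℝ, HasDerivAt (fun s : ℝ => x + s • δ) δ s := fun s => by
    simpa using ((hasDerivAt_id s).smul_const δ).const_add x
  have key := add_deriv_sub_half_le_of_abs_deriv_deriv_le (C := C * ‖δ‖ ^ 2)
    (h := fun s => g (x + s • δ))
    (h' := fun s => fderiv ℝ g (x + s • δ) δ)
    (h'' := fun s => fderiv ℝ (fderiv ℝ g) (x + s • δ) δ δ)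
    (fun s => ((hg.differentiable (by norm_num)) _).hasFDerivAt.comp_hasDerivAt s (hline s))
    (fun s => (ContinuousLinearMap.apply ℝ ℝ δ).hasFDerivAt.comp_hasDerivAt s
      ((hg' _).hasFDerivAt.comp_hasDerivAt s (hline s)))
    fun s hs => calc
      |fderiv ℝ (fderiv ℝ g) (x + s • δ) δ δ| ≤ ‖fderiv ℝ (fderiv ℝ g) (x + s • δ)‖ * ‖δ‖ * ‖δ‖ :=
        by rw [← Real.norm_eq_abs]; exact ContinuousLinearMap.le_opNorm₂ _ _ _
      _ ≤ C * ‖δ‖ ^ 2 := by rw [mul_assoc, ← sq]; gcongr; exact hC s hs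
  simp only [zero_smul, add_zero, one_smul] at key
  linarith

/-- `K_R(g, x)`. -/
noncomputable def hessianNormSup (g : E → ℝ) (x : E) (R : ℝ) : ℝ :=
  sSup ((fun γ => ‖fderiv ℝ (fderiv ℝ g) (x + γ)‖) '' closedBall 0 R)

lemma norm_fderiv_fderiv_le_hessianNormSup [ProperSpace E] {g : E → ℝ} (hg : ContDiff ℝ 2 g)
    (x : E) {R : ℝ} {γ : E} (hγ : ‖γ‖ ≤ R) :
    ‖fderiv ℝ (fderiv ℝ g) (x + γ)‖ ≤ hessianNormSup g x R := by
  have hcont : Continuous fun γ => ‖fderiv ℝ (fderiv ℝ g) (x + γ)‖ :=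
    ((hg.fderiv_right (m := 1) le_rfl).continuous_fderiv one_ne_zero).norm.comp
      (continuous_const_add x)
  exact le_csSup ((isCompact_closedBall 0 R).bddAbove_image hcont.continuousOn)
    ⟨γ, mem_closedBall_zero_iff.mpr hγ, rfl⟩

lemma div_le_norm_of_pos_of_nonpos_add [ProperSpace E] {g : E → ℝ} (hg : ContDiff ℝ 2 g)
    {x δ : E} {R : ℝ} (hδR : ‖δ‖ ≤ R) (hgx : 0 < g x) (hgxδ : g (x + δ) ≤ 0) :
    g x / (‖fderiv ℝ g x‖ + R / 2 * hessianNormSup g x R) ≤ ‖δ‖ := by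
  set Kr := hessianNormSup g x R
  have hK : 0 ≤ Kr := by
    have := norm_fderiv_fderiv_le_hessianNormSup hg x (γ := 0) <| by
      simpa using (norm_nonneg δ).trans hδR
    exact (norm_nonneg (fderiv ℝ (fderiv ℝ g) (x + 0))).trans this
  have htaylor := add_fderiv_sub_half_le_of_norm_fderiv_fderiv_le hg (C := Kr) fun s hs =>
    norm_fderiv_fderiv_le_hessianNormSup hg x <| calc
      ‖s • δ‖ = s * ‖δ‖ := by rw [norm_smul, Real.norm_of_nonneg hs.1]
      _ ≤ 1 * ‖δ‖ := by gcongr; exact hs.2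
      _ ≤ R := by rwa [one_mul]
  have hlin : -(‖fderiv ℝ g x‖ * ‖δ‖) ≤ fderiv ℝ g x δ :=
    neg_le_of_abs_le ((fderiv ℝ g x).le_opNorm δ)
  have hquad : Kr / 2 * ‖δ‖ ^ 2 ≤ R / 2 * Kr * ‖δ‖ := by
    nlinarith [mul_le_mul_of_nonneg_left hδR (mul_nonneg hK (norm_nonneg δ))]
  have hbound : g x ≤ (‖fderiv ℝ g x‖ + R / 2 * Kr) * ‖δ‖ := by linarith
  have hpos : 0 < ‖fderiv ℝ g x‖ + R / 2 * Kr :=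
    pos_of_mul_pos_left (hgx.trans_le hbound) (norm_nonneg δ)
  rwa [div_le_iff₀' hpos]

end

lemma bddBelow_setOf_exists_and_eq {ι : Type*} [Finite ι] (P : ι → Prop) (e : ι → ℝ) :
    BddBelow {b | ∃ i, P i ∧ b = e i} :=
  (finite_range e).bddBelow.mono <| by rintro _ ⟨i, -, rfl⟩; exact mem_range_self i

theorem multiclass_hessian_robustness_general
    (d K : ℕ) (p : ℝ≥0∞) [Fact (1 ≤ p)]
    (f : Fin K → PiLp p (fun _ : Fin d => ℝ) → ℝ)
    (hf : ∀ j, ContDiff ℝ 2 (f j))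
    (x : PiLp p (fun _ : Fin d => ℝ)) (t : Fin K)
    (ht : ∀ j, j ≠ t → f j x < f t x)
    (δ : PiLp p (fun _ : Fin d => ℝ))
    (hδ : ∃ j, j ≠ t ∧ f t (x + δ) < f j (x + δ)) :
    sSup {m : ℝ | ∃ R > (0 : ℝ), m = min R
      (sInf {b : ℝ | ∃ j, j ≠ t ∧
        b = (f t x - f j x) /
          (‖fderiv ℝ (fun y => f t y - f j y) x‖ +
           R / 2 * sSup ((fun γ =>
             ‖fderiv ℝ (fderiv ℝ (fun y => f t y - f j y)) (x + γ)‖) ''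
             Metric.closedBall 0 R))})} ≤ ‖δ‖ := by
  obtain ⟨j, hjt, hflip⟩ := hδ
  refine Real.sSup_le ?_ (norm_nonneg δ)
  rintro _ ⟨R, -, rfl⟩
  rcases le_total R ‖δ‖ with hRδ | hδR
  · exact (min_le_left _ _).trans hRδ
  refine (min_le_right _ _).trans <|
    csInf_le_of_le (bddBelow_setOf_exists_and_eq _ _) ⟨j, hjt, rfl⟩ ?_
  exact div_le_norm_of_pos_of_nonpos_add ((hf t).sub (hf j)) hδR
    (sub_pos.mpr (ht j hjt)) (sub_nonpos.mpr hflip.le)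

/-- The multi-class Corollary: if class `t` is predicted at `x` and the prediction
changes at `x + δ`, then `‖δ‖ₚ ≥ sup_{R>0} min { R, min_{j ≠ t}
f⁽ʲ⁾(x) / (‖(f⁽ʲ⁾)′(x)‖ + (R/2)·K_R(f⁽ʲ⁾,x)) }` with `f⁽ʲ⁾ = f_t − f_j` and
`K_R(g,x) = sup_{‖γ‖ₚ ≤ R} ‖g″(x+γ)‖`. -/
theorem multiclass_hessian_robustness
    (d K : ℕ) (hd : 1 ≤ d) (hK : 2 ≤ K) (p : ℝ≥0∞) [Fact (1 ≤ p)]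
    (f : Fin K → PiLp p (fun _ : Fin d => ℝ) → ℝ)
    (hf : ∀ j, ContDiff ℝ 2 (f j))
    (x : PiLp p (fun _ : Fin d => ℝ)) (t : Fin K)
    (ht : ∀ j, j ≠ t → f j x < f t x)
    (δ : PiLp p (fun _ : Fin d => ℝ))
    (hδ : ∃ j, j ≠ t ∧ f t (x + δ) < f j (x + δ)) :
    sSup {m : ℝ | ∃ R > (0 : ℝ), m = min R
      (sInf {b : ℝ | ∃ j, j ≠ t ∧
        b = (f t x - f j x) /
          (‖fderiv ℝ (fun y => f t y - f j y) x‖ +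
           R / 2 * sSup ((fun γ =>
             ‖fderiv ℝ (fderiv ℝ (fun y => f t y - f j y)) (x + γ)‖) ''
             Metric.closedBall 0 R))})} ≤ ‖δ‖ :=
  multiclass_hessian_robustness_general d K p f hf x t ht δ hδ
end

section
/- Let p ∈ [1,∞], let E be ℝ^d equipped with the ℓ^p norm, let K ≥ 2, and let f : E → ℝ^K have twice continuously differentiable components f₁,…,f_K : E → ℝ. Fix x ∈ E and an index t such that f_t(x) > f_j(x) for all j ≠ t, let R > 0, and for j ≠ t set f^{(j)} := f_t − f_j. If δ ∈ E satisfies f_j(x+δ) ≥ f_t(x+δ) for some j ≠ t, then ‖δ‖_p ≥ min{ R, f^{(j)}(x) / ( ‖(f^{(j)})′(x)‖ + (R/2)·K_R(f^{(j)},x) ) } for that j, where K_R(g,x) := sup_{‖γ‖_p ≤ R} ‖g″(x+γ)‖. -/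
/-!
Write `g = f t - f j`. A second-order Taylor bound along the segment from `x` to `x + δ` gives
`g (x + δ) ≥ g x - ‖g′(x)‖ ‖δ‖ - (M/2) ‖δ‖²` whenever `M` bounds `‖g″‖` on that segment.
If `‖δ‖ < R`, the segment lies in the ball of radius `R` about `x`, so `M = K_R(g, x)` will do,
and the quadratic term is at most `(R/2) M ‖δ‖`; hence `g (x + δ) ≤ 0` forces
`g x ≤ (‖g′(x)‖ + (R/2) M) ‖δ‖`.
-/

open Set Metric

open scoped ENNReal

section SecondOrderBound

variable {E : Type*} [NormedAddCommGroup E] [NormedSpace ℝ E]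

theorem norm_image_add_sub_sub_fderiv_le {F : Type*} [NormedAddCommGroup F] [NormedSpace ℝ F]
    {g : E → F} {x δ : E} {M : ℝ}
    (hg : Differentiable ℝ g) (hg' : Differentiable ℝ (fderiv ℝ g))
    (hM : ∀ y ∈ segment ℝ x (x + δ), ‖fderiv ℝ (fderiv ℝ g) y‖ ≤ M) :
    ‖g (x + δ) - g x - fderiv ℝ g x δ‖ ≤ M / 2 * ‖δ‖ ^ 2 := by
  have hmem : ∀ s ∈ Icc (0 : ℝ) 1, x + s • δ ∈ segment ℝ x (x + δ) := fun s hs => by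
    rw [segment_eq_image']
    exact ⟨s, hs, by simp⟩
  have hlip : ∀ s ∈ Icc (0 : ℝ) 1,
      ‖fderiv ℝ g (x + s • δ) - fderiv ℝ g x‖ ≤ M * (s * ‖δ‖) := fun s hs => by
    have := (convex_segment x (x + δ)).norm_image_sub_le_of_norm_fderiv_le
      (fun z _ => hg' z) hM (left_mem_segment ℝ x (x + δ)) (hmem s hs)
    rwa [add_sub_cancel_left, norm_smul, Real.norm_of_nonneg hs.1] at this
  have hderiv : ∀ s : ℝ, HasDerivAt (fun s : ℝ => g (x + s • δ) - g x - s • fderiv ℝ g x δ)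
      (fderiv ℝ g (x + s • δ) δ - fderiv ℝ g x δ) s := fun s => by
    have hline : HasDerivAt (fun s : ℝ => x + s • δ) δ s := by
      simpa using ((hasDerivAt_id s).smul_const δ).const_add x
    have := (((hg _).hasFDerivAt.comp_hasDerivAt s hline).sub_const (g x)).sub
      ((hasDerivAt_id s).smul_const (fderiv ℝ g x δ))
    rwa [one_smul] at this
  have hbound : ∀ s : ℝ, HasDerivAt (fun s : ℝ => M / 2 * ‖δ‖ ^ 2 * s ^ 2)
      (M * ‖δ‖ ^ 2 * s) s := fun s =>
    ((hasDerivAt_pow 2 s).const_mul (M / 2 * ‖δ‖ ^ 2)).congr_deriv (by push_cast; ring)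
  have := image_norm_le_of_norm_deriv_right_le_deriv_boundary (a := 0) (b := 1)
    (fun s _ => (hderiv s).continuousAt.continuousWithinAt)
    (fun s _ => (hderiv s).hasDerivWithinAt) (by simp) hbound
    (fun s hs => by
      calc ‖fderiv ℝ g (x + s • δ) δ - fderiv ℝ g x δ‖
          ≤ ‖fderiv ℝ g (x + s • δ) - fderiv ℝ g x‖ * ‖δ‖ :=
            (fderiv ℝ g (x + s • δ) - fderiv ℝ g x).le_opNorm δ
        _ ≤ M * (s * ‖δ‖) * ‖δ‖ := by gcongr; exact hlip s (Ico_subset_Icc_self hs)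
        _ = M * ‖δ‖ ^ 2 * s := by ring)
    (right_mem_Icc.2 zero_le_one)
  simpa using this

theorem min_le_norm_of_image_add_nonpos {g : E → ℝ} {x δ : E} {R M : ℝ}
    (hg : Differentiable ℝ g) (hg' : Differentiable ℝ (fderiv ℝ g))
    (hM : ∀ y ∈ closedBall x R, ‖fderiv ℝ (fderiv ℝ g) y‖ ≤ M) (hδ : g (x + δ) ≤ 0) :
    min R (g x / (‖fderiv ℝ g x‖ + R / 2 * M)) ≤ ‖δ‖ := by
  rcases le_or_gt R ‖δ‖ with hRδ | hδR
  · exact min_le_of_left_le hRδ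
  have hR : 0 ≤ R := (norm_nonneg δ).trans hδR.le
  have hM0 : 0 ≤ M := (norm_nonneg (fderiv ℝ (fderiv ℝ g) x)).trans (hM x (mem_closedBall_self hR))
  have hseg : segment ℝ x (x + δ) ⊆ closedBall x R :=
    (convex_closedBall x R).segment_subset (mem_closedBall_self hR)
      (by simpa [dist_eq_norm] using hδR.le)
  have htaylor := norm_image_add_sub_sub_fderiv_le hg hg' fun y hy => hM y (hseg hy)
  have hlin : |fderiv ℝ g x δ| ≤ ‖fderiv ℝ g x‖ * ‖δ‖ := (fderiv ℝ g x).le_opNorm δ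
  have hquad : M / 2 * ‖δ‖ ^ 2 ≤ R / 2 * M * ‖δ‖ := by
    nlinarith [mul_le_mul_of_nonneg_left hδR.le (mul_nonneg hM0 (norm_nonneg δ))]
  have hkey : g x ≤ ‖δ‖ * (‖fderiv ℝ g x‖ + R / 2 * M) := by
    rw [Real.norm_eq_abs] at htaylor
    linarith [(abs_le.1 htaylor).1, (abs_le.1 hlin).1]
  exact min_le_of_right_le (div_le_of_le_mul₀ (by positivity) (norm_nonneg δ) hkey)

end SecondOrderBound

theorem multiclass_hessian_robustness_fixedR_general
    (d K : ℕ) (p : ℝ≥0∞) [Fact (1 ≤ p)]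
    (f : Fin K → PiLp p (fun _ : Fin d => ℝ) → ℝ)
    (hf : ∀ j, ContDiff ℝ 2 (f j))
    (x : PiLp p (fun _ : Fin d => ℝ)) (t : Fin K)
    (R : ℝ)
    (δ : PiLp p (fun _ : Fin d => ℝ))
    (j : Fin K) (hδ : f t (x + δ) ≤ f j (x + δ)) :
    min R ((f t x - f j x) /
      (‖fderiv ℝ (fun y => f t y - f j y) x‖ +
       R / 2 * sSup ((fun γ =>
         ‖fderiv ℝ (fderiv ℝ (fun y => f t y - f j y)) (x + γ)‖) ''
         Metric.closedBall 0 R))) ≤ ‖δ‖ := by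
  have hg : ContDiff ℝ 2 fun y => f t y - f j y := (hf t).sub (hf j)
  have hg' : ContDiff ℝ 1 (fderiv ℝ fun y => f t y - f j y) := hg.fderiv_right le_rfl
  have hbdd : BddAbove ((fun γ => ‖fderiv ℝ (fderiv ℝ (fun y => f t y - f j y)) (x + γ)‖) ''
      closedBall 0 R) :=
    (isCompact_closedBall 0 R).bddAbove_image
      ((hg'.continuous_fderiv one_ne_zero).comp (continuous_const_add x)).norm.continuousOn
  refine min_le_norm_of_image_add_nonpos (hg.differentiable two_ne_zero)
    (hg'.differentiable one_ne_zero) (fun y hy => le_csSup hbdd ⟨y - x, ?_, by simp⟩)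
    (sub_nonpos.2 hδ)
  simpa [dist_eq_norm] using hy

/-- Per-class, fixed-`R` step of the multi-class Corollary: if class `t` is
predicted at `x` and `f j (x+δ) ≥ f t (x+δ)` for some `j ≠ t`, then
`‖δ‖ₚ ≥ min { R, f⁽ʲ⁾(x) / (‖(f⁽ʲ⁾)′(x)‖ + (R/2)·K_R(f⁽ʲ⁾,x)) }` for that `j`. -/
theorem multiclass_hessian_robustness_fixedR
    (d K : ℕ) (hd : 1 ≤ d) (hK : 2 ≤ K) (p : ℝ≥0∞) [Fact (1 ≤ p)]
    (f : Fin K → PiLp p (fun _ : Fin d => ℝ) → ℝ)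
    (hf : ∀ j, ContDiff ℝ 2 (f j))
    (x : PiLp p (fun _ : Fin d => ℝ)) (t : Fin K)
    (ht : ∀ j, j ≠ t → f j x < f t x)
    (R : ℝ) (hR : 0 < R)
    (δ : PiLp p (fun _ : Fin d => ℝ))
    (j : Fin K) (hj : j ≠ t) (hδ : f t (x + δ) ≤ f j (x + δ)) :
    min R ((f t x - f j x) /
      (‖fderiv ℝ (fun y => f t y - f j y) x‖ +
       R / 2 * sSup ((fun γ =>
         ‖fderiv ℝ (fderiv ℝ (fun y => f t y - f j y)) (x + γ)‖) ''
         Metric.closedBall 0 R))) ≤ ‖δ‖ :=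
  multiclass_hessian_robustness_fixedR_general d K p f hf x t R δ j hδ
end

section
/- Let p ∈ [1,∞], let E be ℝ^d equipped with the ℓ^p norm, let f : E → ℝ be twice continuously differentiable, let x ∈ E with f(x) > 0, and let R > 0. If δ ∈ E satisfies ‖δ‖_p < min{ R, f(x) / ( ‖f′(x)‖ + (R/2) · K_R(f,x) ) }, then f(x+δ) > 0, where ‖f′(x)‖ is the operator norm of the Fréchet derivative of f at x and K_R(f,x) := sup_{‖γ‖_p ≤ R} ‖f″(x+γ)‖. -/
open scoped ENNReal

/-!
Since `‖f″‖ ≤ K_R(f, x)` on the closed ball of radius `R` around `x`, the derivative of `f` moves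
by at most `K_R(f, x) · t‖δ‖` along the segment `t ↦ x + t • δ`; comparing with the parabola
`t ↦ K_R(f, x) t² ‖δ‖² / 2` gives the second-order Taylor bound
`|f (x + δ) - f x - f′(x) δ| ≤ K_R(f, x) ‖δ‖² / 2`. For `‖δ‖ < R` this yields
`f (x + δ) ≥ f x - ‖δ‖ (‖f′(x)‖ + (R / 2) K_R(f, x)) > 0`.
-/

open Set Metric

section SecondOrderTaylor

variable {E F : Type*} [NormedAddCommGroup E] [NormedSpace ℝ E]
  [NormedAddCommGroup F] [NormedSpace ℝ F]

theorem norm_image_add_sub_sub_fderiv_le_s10 {f : E → F} {x δ : E} {K : ℝ}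
    (hf : ∀ t ∈ Icc (0 : ℝ) 1, DifferentiableAt ℝ f (x + t • δ))
    (hf' : ∀ t ∈ Icc (0 : ℝ) 1, ‖fderiv ℝ f (x + t • δ) - fderiv ℝ f x‖ ≤ K * (t * ‖δ‖)) :
    ‖f (x + δ) - f x - fderiv ℝ f x δ‖ ≤ K / 2 * ‖δ‖ ^ 2 := by
  set g : ℝ → F := fun t => f (x + t • δ) - f x - t • fderiv ℝ f x δ
  have hg : ∀ t ∈ Icc (0 : ℝ) 1,
      HasDerivAt g (fderiv ℝ f (x + t • δ) δ - fderiv ℝ f x δ) t := by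
    intro t ht
    have hline : HasDerivAt (fun t : ℝ => x + t • δ) δ t := by
      simpa using ((hasDerivAt_id t).smul_const δ).const_add x
    exact (((hf t ht).hasFDerivAt.comp_hasDerivAt t hline).sub_const (f x)).sub
      (by simpa using (hasDerivAt_id t).smul_const (fderiv ℝ f x δ))
  have hB : ∀ t, HasDerivAt (fun t : ℝ => K / 2 * t ^ 2 * ‖δ‖ ^ 2) (K * t * ‖δ‖ ^ 2) t := by
    intro t
    have := ((hasDerivAt_pow 2 t).const_mul (K / 2)).mul_const (‖δ‖ ^ 2)
    exact this.congr_deriv (by simp only [Nat.cast_ofNat, Nat.add_one_sub_one, pow_one]; ring)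
  have hbound : ∀ t ∈ Ico (0 : ℝ) 1,
      ‖fderiv ℝ f (x + t • δ) δ - fderiv ℝ f x δ‖ ≤ K * t * ‖δ‖ ^ 2 := by
    intro t ht
    calc ‖fderiv ℝ f (x + t • δ) δ - fderiv ℝ f x δ‖
        = ‖(fderiv ℝ f (x + t • δ) - fderiv ℝ f x) δ‖ := rfl
      _ ≤ ‖fderiv ℝ f (x + t • δ) - fderiv ℝ f x‖ * ‖δ‖ := ContinuousLinearMap.le_opNorm _ _
      _ ≤ K * (t * ‖δ‖) * ‖δ‖ := by gcongr; exact hf' t (Ico_subset_Icc_self ht)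
      _ = K * t * ‖δ‖ ^ 2 := by ring
  have hparabola := image_norm_le_of_norm_deriv_right_le_deriv_boundary
    (fun t ht => (hg t ht).continuousAt.continuousWithinAt)
    (fun t ht => (hg t (Ico_subset_Icc_self ht)).hasDerivWithinAt)
    (by simp [g]) hB hbound (right_mem_Icc.2 zero_le_one)
  simpa [g] using hparabola

theorem norm_image_add_sub_sub_fderiv_le_of_norm_fderiv_fderiv_le {f : E → F} {x δ : E}
    {r K : ℝ} (hf : ContDiff ℝ 2 f)
    (hK : ∀ y ∈ closedBall x r, ‖fderiv ℝ (fderiv ℝ f) y‖ ≤ K) (hδ : ‖δ‖ ≤ r) :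
    ‖f (x + δ) - f x - fderiv ℝ f x δ‖ ≤ K / 2 * ‖δ‖ ^ 2 := by
  have hf' : Differentiable ℝ (fderiv ℝ f) :=
    (hf.fderiv_right (m := 1) le_rfl).differentiable one_ne_zero
  refine norm_image_add_sub_sub_fderiv_le_s10
    (fun t _ => hf.differentiable two_ne_zero _) fun t ht => ?_
  have hseg : x + t • δ ∈ closedBall x r := by
    rw [mem_closedBall, dist_eq_norm, add_sub_cancel_left, norm_smul, Real.norm_of_nonneg ht.1]
    exact (mul_le_of_le_one_left (norm_nonneg δ) ht.2).trans hδ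
  calc ‖fderiv ℝ f (x + t • δ) - fderiv ℝ f x‖ ≤ K * ‖x + t • δ - x‖ :=
        (convex_closedBall x r).norm_image_sub_le_of_norm_fderiv_le
          (fun y _ => hf' y) hK (mem_closedBall_self ((norm_nonneg δ).trans hδ)) hseg
    _ = K * (t * ‖δ‖) := by
        rw [add_sub_cancel_left, norm_smul, Real.norm_of_nonneg ht.1]

/-- The paper's `K_R(f, x)`. -/
noncomputable def localHessianBound (f : E → ℝ) (x : E) (R : ℝ) : ℝ :=
  sSup ((fun γ => ‖fderiv ℝ (fderiv ℝ f) (x + γ)‖) '' closedBall 0 R)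

theorem norm_fderiv_fderiv_le_localHessianBound [ProperSpace E] {f : E → ℝ}
    (hf : ContDiff ℝ 2 f) {x y : E} {R : ℝ} (hy : y ∈ closedBall x R) :
    ‖fderiv ℝ (fderiv ℝ f) y‖ ≤ localHessianBound f x R := by
  have hcont : Continuous fun γ => ‖fderiv ℝ (fderiv ℝ f) (x + γ)‖ :=
    ((hf.fderiv_right (m := 1) le_rfl).continuous_fderiv one_ne_zero).norm.comp
      (continuous_const_add x)
  refine le_csSup ((isCompact_closedBall 0 R).bddAbove_image hcont.continuousOn) ⟨y - x, ?_, ?_⟩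
  · rwa [mem_closedBall_zero_iff, ← dist_eq_norm]
  · simp

end SecondOrderTaylor

theorem hessian_robustness_certificate_general
    (d : ℕ) (p : ℝ≥0∞) [Fact (1 ≤ p)]
    (f : PiLp p (fun _ : Fin d => ℝ) → ℝ) (hf : ContDiff ℝ 2 f)
    (x : PiLp p (fun _ : Fin d => ℝ))
    (R : ℝ)
    (δ : PiLp p (fun _ : Fin d => ℝ))
    (hδ : ‖δ‖ < min R (f x / (‖fderiv ℝ f x‖ +
      R / 2 * sSup ((fun γ => ‖fderiv ℝ (fderiv ℝ f) (x + γ)‖) ''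
        Metric.closedBall 0 R)))) :
    0 < f (x + δ) := by
  change ‖δ‖ < min R (f x / (‖fderiv ℝ f x‖ + R / 2 * localHessianBound f x R)) at hδ
  set K := localHessianBound f x R
  have hδR : ‖δ‖ < R := hδ.trans_le (min_le_left _ _)
  have hδD : ‖δ‖ < f x / (‖fderiv ℝ f x‖ + R / 2 * K) := hδ.trans_le (min_le_right _ _)
  have hR : 0 ≤ R := (norm_nonneg δ).trans hδR.le
  have hK : ∀ y ∈ closedBall x R, ‖fderiv ℝ (fderiv ℝ f) y‖ ≤ K := fun y hy =>
    norm_fderiv_fderiv_le_localHessianBound hf hy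
  have hK0 : 0 ≤ K := (norm_nonneg (fderiv ℝ (fderiv ℝ f) x)).trans (hK x (mem_closedBall_self hR))
  have hD : 0 < ‖fderiv ℝ f x‖ + R / 2 * K := by
    refine (by positivity : 0 ≤ ‖fderiv ℝ f x‖ + R / 2 * K).lt_of_ne fun hD0 => ?_
    rw [← hD0, div_zero] at hδD
    exact (norm_nonneg δ).not_gt hδD
  have hmargin := (lt_div_iff₀ hD).1 hδD
  have hquad : K / 2 * ‖δ‖ ^ 2 ≤ ‖δ‖ * (R / 2 * K) :=
    calc K / 2 * ‖δ‖ ^ 2 = ‖δ‖ * (‖δ‖ / 2 * K) := by ring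
      _ ≤ ‖δ‖ * (R / 2 * K) := by gcongr
  have hremainder := abs_le.1 <|
    norm_image_add_sub_sub_fderiv_le_of_norm_fderiv_fderiv_le hf hK hδR.le
  have hlinear := abs_le.1 <| (fderiv ℝ f x).le_opNorm δ
  linarith

/-- Robustness-certificate form of Theorem 2: if `f x > 0` and
`‖δ‖ₚ < min { R, f x / (‖f′(x)‖ + (R/2)·K_R(f,x)) }`, then `f (x+δ) > 0`. -/
theorem hessian_robustness_certificate
    (d : ℕ) (hd : 1 ≤ d) (p : ℝ≥0∞) [Fact (1 ≤ p)]
    (f : PiLp p (fun _ : Fin d => ℝ) → ℝ) (hf : ContDiff ℝ 2 f)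
    (x : PiLp p (fun _ : Fin d => ℝ)) (hx : 0 < f x)
    (R : ℝ) (hR : 0 < R)
    (δ : PiLp p (fun _ : Fin d => ℝ))
    (hδ : ‖δ‖ < min R (f x / (‖fderiv ℝ f x‖ +
      R / 2 * sSup ((fun γ => ‖fderiv ℝ (fderiv ℝ f) (x + γ)‖) ''
        Metric.closedBall 0 R)))) :
    0 < f (x + δ) :=
  hessian_robustness_certificate_general d p f hf x R δ hδ
end

section
/- Let p ∈ [1,∞], let E be ℝ^d equipped with the ℓ^p norm, let f : E → ℝ be continuously differentiable, let x ∈ E with f(x) > 0, and let R > 0 with G_R := sup_{‖γ‖_p ≤ R} ‖f′(x+γ)‖ > 0. If δ ∈ E satisfies ‖δ‖_p < min{ R, f(x) / G_R }, then f(x+δ) > 0, where ‖f′(y)‖ denotes the operator norm of the Fréchet derivative of f at y. -/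
open scoped ENNReal

/-! By the mean value inequality on the ball of radius `‖δ‖ < R` around `x`, where `‖f′‖ ≤ G_R`,
`f (x + δ) ≥ f x - G_R ‖δ‖`, and this is positive because `‖δ‖ < f x / G_R`. -/

open Metric

section

variable {E F : Type*} [NormedAddCommGroup E] [NormedSpace ℝ E]
  [NormedAddCommGroup F] [NormedSpace ℝ F]

theorem norm_fderiv_add_le_sSup_closedBall [ProperSpace E] {f : E → F} (hf : ContDiff ℝ 1 f)
    (x : E) {R : ℝ} {γ : E} (hγ : ‖γ‖ ≤ R) :
    ‖fderiv ℝ f (x + γ)‖ ≤ sSup ((fun γ => ‖fderiv ℝ f (x + γ)‖) '' closedBall 0 R) := by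
  have hcont : Continuous fun γ => ‖fderiv ℝ f (x + γ)‖ :=
    ((hf.continuous_fderiv one_ne_zero).comp (continuous_const_add x)).norm
  refine le_csSup ((isCompact_closedBall 0 R).bddAbove_image hcont.continuousOn) ⟨γ, ?_, rfl⟩
  rwa [mem_closedBall, dist_zero_right]

theorem sub_mul_norm_le_of_norm_fderiv_le {f : E → ℝ} (hf : Differentiable ℝ f) {x δ : E}
    {C : ℝ} (hC : ∀ y ∈ closedBall x ‖δ‖, ‖fderiv ℝ f y‖ ≤ C) :
    f x - C * ‖δ‖ ≤ f (x + δ) := by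
  have hxδ : x + δ ∈ closedBall x ‖δ‖ := by
    rw [mem_closedBall, dist_self_add_left]
  have hdist := (convex_closedBall x ‖δ‖).norm_image_sub_le_of_norm_fderiv_le
    (fun y _ => hf y) hC (mem_closedBall_self (norm_nonneg δ)) hxδ
  rw [add_sub_cancel_left, Real.norm_eq_abs] at hdist
  linarith [neg_abs_le (f (x + δ) - f x)]

end

theorem gradient_robustness_certificate_general
    (d : ℕ) (p : ℝ≥0∞) [Fact (1 ≤ p)]
    (f : PiLp p (fun _ : Fin d => ℝ) → ℝ) (hf : ContDiff ℝ 1 f)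
    (x : PiLp p (fun _ : Fin d => ℝ))
    (R : ℝ)
    (hG : 0 < sSup ((fun γ => ‖fderiv ℝ f (x + γ)‖) '' Metric.closedBall 0 R))
    (δ : PiLp p (fun _ : Fin d => ℝ))
    (hδ : ‖δ‖ < min R (f x /
      sSup ((fun γ => ‖fderiv ℝ f (x + γ)‖) '' Metric.closedBall 0 R))) :
    0 < f (x + δ) := by
  set G := sSup ((fun γ => ‖fderiv ℝ f (x + γ)‖) '' closedBall 0 R)
  obtain ⟨hδR, hδG⟩ := lt_min_iff.mp hδ
  have hbound : ∀ y ∈ closedBall x ‖δ‖, ‖fderiv ℝ f y‖ ≤ G := fun y hy => by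
    have hyx : ‖y - x‖ ≤ R := (mem_closedBall_iff_norm.mp hy).trans hδR.le
    simpa using norm_fderiv_add_le_sSup_closedBall hf x hyx
  have hdecrease := sub_mul_norm_le_of_norm_fderiv_le (hf.differentiable one_ne_zero) hbound
  have hmargin : G * ‖δ‖ < f x := by rwa [lt_div_iff₀ hG, mul_comm] at hδG
  linarith

/-- Robustness-certificate form of Theorem 1 (Hein–Andriushchenko): if `f x > 0`,
`G_R := sup_{‖γ‖ₚ ≤ R} ‖f′(x+γ)‖ > 0`, and `‖δ‖ₚ < min { R, f x / G_R }`, then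
`f (x+δ) > 0`. -/
theorem gradient_robustness_certificate
    (d : ℕ) (hd : 1 ≤ d) (p : ℝ≥0∞) [Fact (1 ≤ p)]
    (f : PiLp p (fun _ : Fin d => ℝ) → ℝ) (hf : ContDiff ℝ 1 f)
    (x : PiLp p (fun _ : Fin d => ℝ)) (hx : 0 < f x)
    (R : ℝ) (hR : 0 < R)
    (hG : 0 < sSup ((fun γ => ‖fderiv ℝ f (x + γ)‖) '' Metric.closedBall 0 R))
    (δ : PiLp p (fun _ : Fin d => ℝ))
    (hδ : ‖δ‖ < min R (f x /
      sSup ((fun γ => ‖fderiv ℝ f (x + γ)‖) '' Metric.closedBall 0 R))) :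
    0 < f (x + δ) :=
  gradient_robustness_certificate_general d p f hf x R hG δ hδ
end

section
/- Let V be a compact topological space, let D be a finite-dimensional real normed vector space, and let g : D × V → ℝ be continuous. Suppose that for every v ∈ V the map θ ↦ g(θ, v) is differentiable, with Fréchet derivative D_θ g(θ, v) ∈ D →L[ℝ] ℝ depending continuously on (θ, v) jointly. Define φ : D → ℝ by φ(θ) = sup_{v ∈ V} g(θ, v). If at a point θ₀ ∈ D the supremum is attained at a unique v* ∈ V (i.e., g(θ₀, v*) = φ(θ₀) and g(θ₀, v) < φ(θ₀) for all v ≠ v*), then φ is differentiable at θ₀ with Fréchet derivative D_θ g(θ₀, v*). -/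
/-!
Since `φ ≥ g(·, v*)` with equality at `θ₀`, the derivative of `g(·, v*)` bounds
`φ(θ) - φ(θ₀) - D_θ g(θ₀, v*)(θ - θ₀)` from below. For the upper bound pick a maximizer `w` of
`g(θ, ·)`; then `φ(θ) - φ(θ₀) ≤ g(θ, w) - g(θ₀, w)`. Compactness and uniqueness of `v*` force
`w` close to `v*` when `θ` is close to `θ₀`, and there the mean value theorem, together with the
joint continuity of `D_θ g`, makes `g(θ, w) - g(θ₀, w)` equal to `D_θ g(θ₀, v*)(θ - θ₀)` up to
`o(‖θ - θ₀‖)`.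
-/

open Filter Metric Set Topology Asymptotics

theorem Continuous.exists_ciSup_eq_apply {V α : Type*} [TopologicalSpace V] [CompactSpace V]
    [Nonempty V] [ConditionallyCompleteLinearOrder α] [TopologicalSpace α] [ClosedIciTopology α]
    {f : V → α} (hf : Continuous f) : ∃ w, ⨆ v, f v = f w ∧ ∀ v, f v ≤ f w := by
  obtain ⟨w, hw⟩ := hf.exists_forall_ge' (Classical.arbitrary V) (by simp)
  exact ⟨w, ciSup_eq_of_forall_le_of_forall_lt_exists_gt hw fun _ h => ⟨w, h⟩, hw⟩

theorem eventually_forall_mem_of_le_of_unique_max {X V α : Type*} [TopologicalSpace X]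
    [TopologicalSpace V] [CompactSpace V] [LinearOrder α] [TopologicalSpace α]
    [OrderClosedTopology α] {g : X × V → α} (hg : Continuous g) {x₀ : X} {v₀ : V}
    (hv₀ : ∀ v ≠ v₀, g (x₀, v) < g (x₀, v₀)) {W : Set V} (hW : W ∈ 𝓝 v₀) :
    ∀ᶠ x in 𝓝 x₀, ∀ v, g (x, v₀) ≤ g (x, v) → v ∈ W := by
  have hK : IsCompact (interior W)ᶜ := isOpen_interior.isClosed_compl.isCompact
  have hgap : ∀ v ∈ (interior W)ᶜ, ∀ᶠ p : X × V in 𝓝 (x₀, v), g (p.1, p.2) < g (p.1, v₀) := by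
    intro v hv
    have hne : v ≠ v₀ := by
      rintro rfl
      exact hv (mem_interior_iff_mem_nhds.mpr hW)
    exact (isOpen_lt hg (by fun_prop)).mem_nhds (hv₀ v hne)
  filter_upwards [hK.eventually_forall_of_forall_eventually
    (P := fun x v => g (x, v) < g (x, v₀)) hgap] with x hx v hle
  by_contra hvW
  exact (hx v fun h => hvW (interior_subset h)).not_ge hle

theorem eventually_prod_norm_sub_sub_le {E V F : Type*} [NormedAddCommGroup E] [NormedSpace ℝ E]
    [TopologicalSpace V] [NormedAddCommGroup F] [NormedSpace ℝ F] {g : E × V → F}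
    {Dg : E × V → E →L[ℝ] F} (hDg : ∀ θ v, HasFDerivAt (fun θ' => g (θ', v)) (Dg (θ, v)) θ)
    {θ₀ : E} {v₀ : V} (hDgc : ContinuousAt Dg (θ₀, v₀)) {ε : ℝ} (hε : 0 < ε) :
    ∀ᶠ p in 𝓝 θ₀ ×ˢ 𝓝 v₀, ‖g p - g (θ₀, p.2) - Dg (θ₀, v₀) (p.1 - θ₀)‖ ≤ ε * ‖p.1 - θ₀‖ := by
  set L := Dg (θ₀, v₀)
  have hclose : ∀ᶠ p in 𝓝 θ₀ ×ˢ 𝓝 v₀, ‖Dg p - L‖ < ε := by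
    rw [← nhds_prod_eq]
    simpa only [dist_eq_norm] using hDgc.eventually (ball_mem_nhds L hε)
  obtain ⟨U, hU, W, hW, hUW⟩ := eventually_prod_iff.mp hclose
  obtain ⟨r, hr, hball⟩ := eventually_nhds_iff_ball.mp hU
  refine eventually_prod_iff.mpr ⟨(· ∈ ball θ₀ r), ball_mem_nhds θ₀ hr, W, hW, ?_⟩
  intro θ hθ w hw
  have hmvt := (convex_ball θ₀ r).norm_image_sub_le_of_norm_hasFDerivWithin_le
    (f := fun θ' => g (θ', w) - L θ') (f' := fun θ' => Dg (θ', w) - L)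
    (fun θ' _ => ((hDg θ' w).sub L.hasFDerivAt).hasFDerivWithinAt)
    (fun θ' hθ' => (hUW (hball θ' hθ') hw).le) (mem_ball_self hr) hθ
  convert hmvt using 2
  simp only [map_sub]
  abel

theorem danskin_unique_maximizer_general
    {V : Type*} [TopologicalSpace V] [CompactSpace V]
    {D : Type*} [NormedAddCommGroup D] [NormedSpace ℝ D]
    (g : D × V → ℝ) (hg : Continuous g)
    (Dg : D × V → D →L[ℝ] ℝ)
    (hDg : ∀ (θ : D) (v : V), HasFDerivAt (fun θ' => g (θ', v)) (Dg (θ, v)) θ)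
    (hDgc : Continuous Dg)
    (θ₀ : D) (vstar : V)
    (hmax : g (θ₀, vstar) = ⨆ v, g (θ₀, v))
    (huniq : ∀ v, v ≠ vstar → g (θ₀, v) < ⨆ v', g (θ₀, v')) :
    HasFDerivAt (fun θ => ⨆ v, g (θ, v)) (Dg (θ₀, vstar)) θ₀ := by
  have : Nonempty V := ⟨vstar⟩
  have hle : ∀ θ v, g (θ, v) ≤ ⨆ v', g (θ, v') := fun θ v =>
    le_ciSup (f := fun v' => g (θ, v')) (isCompact_range (by fun_prop)).bddAbove v
  rw [hasFDerivAt_iff_isLittleO, isLittleO_iff]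
  intro ε hε
  obtain ⟨U, hU, W, hW, hUW⟩ :=
    eventually_prod_iff.mp (eventually_prod_norm_sub_sub_le hDg hDgc.continuousAt hε)
  filter_upwards [hU, eventually_forall_mem_of_le_of_unique_max hg (hmax ▸ huniq) hW,
    (hDg θ₀ vstar).isLittleO.bound hε] with θ hθU hθW hlower
  obtain ⟨w, hφw, hw⟩ := (show Continuous fun v => g (θ, v) by fun_prop).exists_ciSup_eq_apply
  have hupper := hUW hθU (hθW w (hw vstar))
  simp only [Real.norm_eq_abs, abs_le] at hlower hupper ⊢
  constructor <;> linarith [hle θ vstar, hle θ₀ w]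

/-- Danskin's theorem (instance used by the paper): if `g : D × V → ℝ` is continuous
on a compact `V`, `θ ↦ g (θ, v)` is differentiable with derivative `Dg (θ, v)`
depending continuously on `(θ, v)`, and at `θ₀` the supremum `φ θ = ⨆ v, g (θ, v)`
is attained at a unique `v*`, then `φ` is differentiable at `θ₀` with derivative
`Dg (θ₀, v*)`. -/
theorem danskin_unique_maximizer
    {V : Type*} [TopologicalSpace V] [CompactSpace V]
    {D : Type*} [NormedAddCommGroup D] [NormedSpace ℝ D] [FiniteDimensional ℝ D]
    (g : D × V → ℝ) (hg : Continuous g)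
    (Dg : D × V → D →L[ℝ] ℝ)
    (hDg : ∀ (θ : D) (v : V), HasFDerivAt (fun θ' => g (θ', v)) (Dg (θ, v)) θ)
    (hDgc : Continuous Dg)
    (θ₀ : D) (vstar : V)
    (hmax : g (θ₀, vstar) = ⨆ v, g (θ₀, v))
    (huniq : ∀ v, v ≠ vstar → g (θ₀, v) < ⨆ v', g (θ₀, v')) :
    HasFDerivAt (fun θ => ⨆ v, g (θ, v)) (Dg (θ₀, vstar)) θ₀ :=
  danskin_unique_maximizer_general g hg Dg hDg hDgc θ₀ vstar hmax huniq
end
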